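/- Let φ denote the standard Gaussian density and Φ its cumulative distribution function, and for a > 0 define h(a) = 1 − 2φ(a)²/(1 − Φ(a)), the expected squared error of the optimal symmetric ternary quantizer with threshold a under a standard Gaussian prior. Then h is differentiable on (0, ∞) and h'(a) = 0 if and only if φ(a) = 2a(1 − Φ(a)). -/

import Mathlib

/-!
With `φ' = -xφ` and `Φ' = φ`, the quotient rule gives
`h'(a) = 2φ(a)² (2a(1 - Φ(a)) - φ(a)) / (1 - Φ(a))²`, and the prefactor is positive because
`φ > 0` and `Φ < 1`; so `h'(a) = 0` exactly when `φ(a) = 2a(1 - Φ(a))`.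
-/

open MeasureTheory Set

/-- The standard Gaussian density. -/
noncomputable def gaussPdf (x : ℝ) : ℝ := (Real.sqrt (2 * Real.pi))⁻¹ * Real.exp (-x ^ 2 / 2)

/-- The standard Gaussian cumulative distribution function. -/
noncomputable def gaussCdf (a : ℝ) : ℝ := ∫ x in Iic a, gaussPdf x

theorem hasDerivAt_integral_Iic {E : Type*} [NormedAddCommGroup E] [NormedSpace ℝ E]
    [CompleteSpace E] {f : ℝ → E} (hf : Integrable f) {a : ℝ} (hfa : ContinuousAt f a) :
    HasDerivAt (fun x => ∫ t in Iic x, f t) (f a) a := by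
  have hsplit : (fun x => ∫ t in Iic x, f t) =
      fun x => (∫ t in Iic 0, f t) + ∫ t in (0 : ℝ)..x, f t := by
    funext x
    rw [← intervalIntegral.integral_Iic_sub_Iic hf.integrableOn hf.integrableOn, add_sub_cancel]
  rw [hsplit]
  exact (intervalIntegral.integral_hasDerivAt_right hf.intervalIntegrable
    hf.aestronglyMeasurable.stronglyMeasurableAtFilter hfa).const_add _

theorem setIntegral_Iic_lt_integral {f : ℝ → ℝ} (hf : Integrable f) (hpos : ∀ x, 0 < f x) (a : ℝ) :
    ∫ t in Iic a, f t < ∫ t, f t := by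
  have htail : 0 < ∫ t in Ioi a, f t := by
    rw [setIntegral_pos_iff_support_of_nonneg_ae (ae_of_all _ fun x => (hpos x).le) hf.integrableOn,
      eq_univ_of_forall fun x => Function.mem_support.mpr (hpos x).ne', univ_inter, Real.volume_Ioi]
    exact ENNReal.zero_lt_top
  rw [← intervalIntegral.integral_Iic_add_Ioi hf.integrableOn hf.integrableOn]
  linarith

theorem gaussPdf_eq_gaussianPDFReal : gaussPdf = ProbabilityTheory.gaussianPDFReal 0 1 := by
  funext x
  simp [gaussPdf, ProbabilityTheory.gaussianPDFReal]

theorem gaussPdf_pos (x : ℝ) : 0 < gaussPdf x := by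
  unfold gaussPdf
  positivity

theorem continuous_gaussPdf : Continuous gaussPdf := by
  unfold gaussPdf
  fun_prop

theorem integrable_gaussPdf : Integrable gaussPdf :=
  gaussPdf_eq_gaussianPDFReal ▸ ProbabilityTheory.integrable_gaussianPDFReal 0 1

theorem integral_gaussPdf : ∫ x, gaussPdf x = 1 :=
  gaussPdf_eq_gaussianPDFReal ▸ ProbabilityTheory.integral_gaussianPDFReal_eq_one 0 one_ne_zero

theorem gaussCdf_lt_one (a : ℝ) : gaussCdf a < 1 :=
  integral_gaussPdf ▸ setIntegral_Iic_lt_integral integrable_gaussPdf gaussPdf_pos a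

theorem hasDerivAt_gaussCdf (a : ℝ) : HasDerivAt gaussCdf (gaussPdf a) a :=
  hasDerivAt_integral_Iic integrable_gaussPdf continuous_gaussPdf.continuousAt

theorem hasDerivAt_gaussPdf (a : ℝ) : HasDerivAt gaussPdf (-a * gaussPdf a) a := by
  have hexponent : HasDerivAt (fun x : ℝ => -x ^ 2 / 2) (-a) a :=
    ((hasDerivAt_pow 2 a).neg.div_const 2).congr_deriv (by norm_num; ring)
  exact (hexponent.exp.const_mul _).congr_deriv (by unfold gaussPdf; ring)

theorem hasDerivAt_quantizerError (a : ℝ) :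
    HasDerivAt (fun x => 1 - 2 * gaussPdf x ^ 2 / (1 - gaussCdf x))
      (2 * gaussPdf a ^ 2 / (1 - gaussCdf a) ^ 2 * (2 * a * (1 - gaussCdf a) - gaussPdf a)) a := by
  have hD : 1 - gaussCdf a ≠ 0 := (sub_pos.mpr (gaussCdf_lt_one a)).ne'
  have hnum := ((hasDerivAt_gaussPdf a).pow 2).const_mul 2
  have hden := (hasDerivAt_gaussCdf a).const_sub 1
  refine ((hnum.div hden hD).const_sub 1).congr_deriv ?_
  rw [Pi.pow_apply]
  field_simp
  ring

/-- The expected squared error `h(a) = 1 - 2φ(a)²/(1 - Φ(a))` of the optimal symmetric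
ternary quantizer is differentiable on `(0, ∞)`, and its derivative vanishes at `a`
if and only if `φ(a) = 2a(1 - Φ(a))`. -/
theorem stmt_14 (h : ℝ → ℝ)
    (hh : ∀ a : ℝ, h a = 1 - 2 * gaussPdf a ^ 2 / (1 - gaussCdf a)) :
    ∀ a ∈ Ioi (0 : ℝ), DifferentiableAt ℝ h a ∧
      (deriv h a = 0 ↔ gaussPdf a = 2 * a * (1 - gaussCdf a)) := by
  obtain rfl : h = fun a => 1 - 2 * gaussPdf a ^ 2 / (1 - gaussCdf a) := funext hh
  intro a _
  have hderiv := hasDerivAt_quantizerError a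
  refine ⟨hderiv.differentiableAt, ?_⟩
  have hfactor : 2 * gaussPdf a ^ 2 / (1 - gaussCdf a) ^ 2 ≠ 0 := by
    have hpdf := gaussPdf_pos a
    have hcdf := gaussCdf_lt_one a
    positivity
  rw [hderiv.deriv, mul_eq_zero, or_iff_right hfactor, sub_eq_zero, eq_comm]
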